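/- Let H be an algebraic subgroup of an affine algebraic group G over a field k with O(G/H) = k. Then for every finite-dimensional G-module V, the fixed-point subspace V^H equals V^G. -/

import Mathlib

open TensorProduct

/-!
We use the standard anti-equivalence between affine algebraic groups over a field `k`
and finitely generated commutative Hopf `k`-algebras.  An affine algebraic group `G`
corresponds to its Hopf algebra `A = O(G)`, a closed subgroup `H ⊂ G` to a surjective
Hopf algebra map `π : O(G) → O(H)`, a homomorphism `G → G'` to a Hopf algebra map
`O(G') → O(G)`, and a finite-dimensional `G`-module to a finite-dimensional
`A`-comodule.  `O(G/H)` is identified with the right `H`-invariants of `O(G)`.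
-/

/-- The right `H`-invariants `O(G)^H ⊆ O(G)`, i.e. `O(G/H)`, for the subgroup
corresponding to the surjection `π : O(G) → O(H)`. -/
def rightInvariants (k A B : Type) [Field k] [CommRing A] [HopfAlgebra k A]
    [CommRing B] [HopfAlgebra k B] (π : A →ₐc[k] B) : Set A :=
  {a | LinearMap.lTensor A (π : A →ₗ[k] B) (Coalgebra.comul (R := k) a) = a ⊗ₜ[k] (1 : B)}

/-- A (rational) representation of the affine group scheme with Hopf algebra `A`,
i.e. a right `A`-comodule structure on `V`. -/
structure RationalRep (k A V : Type) [Field k] [CommRing A] [HopfAlgebra k A]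
    [AddCommGroup V] [Module k V] where
  ρ : V →ₗ[k] V ⊗[k] A
  coassoc : (TensorProduct.assoc k V A A).toLinearMap ∘ₗ LinearMap.rTensor A ρ ∘ₗ ρ
      = LinearMap.lTensor V (Coalgebra.comul (R := k)) ∘ₗ ρ
  counit : (TensorProduct.rid k V).toLinearMap ∘ₗ
      LinearMap.lTensor V (Coalgebra.counit (R := k)) ∘ₗ ρ = LinearMap.id

/-- The fixed points `V^G` of a rational representation. -/
def RationalRep.fixedPoints {k A V : Type} [Field k] [CommRing A] [HopfAlgebra k A]
    [AddCommGroup V] [Module k V] (r : RationalRep k A V) : Set V :=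
  {v | r.ρ v = v ⊗ₜ[k] (1 : A)}

/-- The fixed points `V^H` of (the restriction to `H` of) a rational representation of
`G`, where `H` corresponds to the surjection `π : O(G) → O(H)`. -/
def RationalRep.fixedPointsUnder {k A B V : Type} [Field k] [CommRing A] [HopfAlgebra k A]
    [CommRing B] [HopfAlgebra k B] [AddCommGroup V] [Module k V]
    (π : A →ₐc[k] B) (r : RationalRep k A V) : Set V :=
  {v | LinearMap.lTensor V (π : A →ₗ[k] B) (r.ρ v) = v ⊗ₜ[k] (1 : B)}

/-- `W` is a `G`-submodule of the representation `r`. -/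
def RationalRep.IsSubrep {k A V : Type} [Field k] [CommRing A] [HopfAlgebra k A]
    [AddCommGroup V] [Module k V] (r : RationalRep k A V) (W : Submodule k V) : Prop :=
  ∀ v ∈ W, r.ρ v ∈ LinearMap.range (LinearMap.rTensor A W.subtype)

/-- `W` is an `H`-submodule of (the restriction of) the representation `r`, where `H`
corresponds to the surjection `π : O(G) → O(H)`. -/
def RationalRep.IsSubrepUnder {k A B V : Type} [Field k] [CommRing A] [HopfAlgebra k A]
    [CommRing B] [HopfAlgebra k B] [AddCommGroup V] [Module k V]
    (π : A →ₐc[k] B) (r : RationalRep k A V) (W : Submodule k V) : Prop :=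
  ∀ v ∈ W, LinearMap.lTensor V (π : A →ₗ[k] B) (r.ρ v) ∈
    LinearMap.range (LinearMap.rTensor B W.subtype)

/-- `H` is (affine) epimorphic in `G`: any two morphisms from `G` to an affine algebraic
group agreeing on `H` are equal.  In Hopf algebra terms: any two Hopf algebra maps
`O(G') → O(G)` with equal composites with `π : O(G) → O(H)` are equal. -/
def IsAffineEpimorphic (k A B : Type) [Field k] [CommRing A] [HopfAlgebra k A]
    [CommRing B] [HopfAlgebra k B] (π : A →ₐc[k] B) : Prop :=
  ∀ (A' : Type) (_ : CommRing A') (_ : HopfAlgebra k A') (_ : Algebra.FiniteType k A')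
    (φ₁ φ₂ : A' →ₐc[k] A), π.comp φ₁ = π.comp φ₂ → φ₁ = φ₂

/-! If `v ∈ V^H`, coassociativity of the coaction `ρ` shows that `ρ v ∈ V ⊗ O(G)` is right
`H`-invariant in its `O(G)` factor.  Tensoring with `V` over the field `k` is exact, so it
preserves the equalizer `k → O(G) ⇉ O(G) ⊗ O(H)` that `O(G/H) = k` provides; hence
`ρ v = w ⊗ 1`, and the counit axiom forces `w = v`. -/

section

variable {k A B V : Type} [Field k] [CommRing A] [HopfAlgebra k A] [CommRing B]
  [HopfAlgebra k B] [AddCommGroup V] [Module k V]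

lemma lTensor_flip_mk_one_eq_assoc (x : V ⊗[k] A) :
    LinearMap.lTensor V ((TensorProduct.mk k A B).flip 1) x
      = TensorProduct.assoc k V A B (x ⊗ₜ[k] 1) := by
  induction x using TensorProduct.induction_on with
  | zero => simp
  | tmul v a => simp
  | add x y hx hy => simp [hx, hy, TensorProduct.add_tmul]

lemma algebraMap_mem_rightInvariants (π : A →ₐc[k] B) (c : k) :
    algebraMap k A c ∈ rightInvariants k A B π := by
  simp [rightInvariants, Algebra.algebraMap_eq_smul_one, Algebra.TensorProduct.one_def,
    TensorProduct.smul_tmul']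

noncomputable def rightInvarianceDefect (π : A →ₐc[k] B) : A →ₗ[k] A ⊗[k] B :=
  LinearMap.lTensor A (π : A →ₗ[k] B) ∘ₗ Coalgebra.comul - (TensorProduct.mk k A B).flip 1

lemma mem_rightInvariants_iff (π : A →ₐc[k] B) (a : A) :
    a ∈ rightInvariants k A B π ↔ rightInvarianceDefect π a = 0 :=
  sub_eq_zero.symm

lemma exact_algebraMap_rightInvarianceDefect {π : A →ₐc[k] B}
    (hconst : rightInvariants k A B π ⊆ Set.range (algebraMap k A)) :
    Function.Exact (Algebra.linearMap k A) (rightInvarianceDefect π) := fun a => by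
  rw [← mem_rightInvariants_iff]
  exact ⟨fun ha => hconst ha, fun ⟨c, hc⟩ => hc ▸ algebraMap_mem_rightInvariants π c⟩

namespace RationalRep

open LinearMap in
lemma coassoc_restrict (π : A →ₐc[k] B) (r : RationalRep k A V) :
    lTensor V (lTensor A (π : A →ₗ[k] B) ∘ₗ Coalgebra.comul) ∘ₗ r.ρ
      = (TensorProduct.assoc k V A B).toLinearMap ∘ₗ rTensor B r.ρ ∘ₗ
          lTensor V (π : A →ₗ[k] B) ∘ₗ r.ρ := by
  have assoc_natural : lTensor V (lTensor A (π : A →ₗ[k] B)) ∘ₗ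
      (TensorProduct.assoc k V A A).toLinearMap
        = (TensorProduct.assoc k V A B).toLinearMap ∘ₗ lTensor (V ⊗[k] A) (π : A →ₗ[k] B) :=
    TensorProduct.ext_threefold fun _ _ _ => rfl
  rw [lTensor_comp, comp_assoc, ← r.coassoc, ← comp_assoc, assoc_natural, comp_assoc,
    ← comp_assoc _ (rTensor A r.ρ), lTensor_comp_rTensor, ← rTensor_comp_lTensor, comp_assoc]

lemma lTensor_rightInvarianceDefect_rho {π : A →ₐc[k] B} {r : RationalRep k A V} {v : V}
    (hv : v ∈ r.fixedPointsUnder π) :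
    LinearMap.lTensor V (rightInvarianceDefect π) (r.ρ v) = 0 := by
  have hcoassoc := LinearMap.congr_fun (r.coassoc_restrict π) v
  simp only [LinearMap.comp_apply] at hcoassoc
  rw [rightInvarianceDefect, LinearMap.lTensor_sub, LinearMap.sub_apply, sub_eq_zero,
    hcoassoc, hv, LinearMap.rTensor_tmul, lTensor_flip_mk_one_eq_assoc]
  rfl

lemma eq_of_rho_eq_tmul_one {r : RationalRep k A V} {v w : V} (h : r.ρ v = w ⊗ₜ[k] 1) :
    w = v := by
  simpa [h] using LinearMap.congr_fun r.counit v

lemma fixedPoints_subset_fixedPointsUnder (π : A →ₐc[k] B) (r : RationalRep k A V) :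
    r.fixedPoints ⊆ r.fixedPointsUnder π := fun v hv => by
  simp [fixedPointsUnder, show r.ρ v = v ⊗ₜ[k] 1 from hv]

lemma fixedPointsUnder_subset_fixedPoints {π : A →ₐc[k] B}
    (hconst : rightInvariants k A B π ⊆ Set.range (algebraMap k A)) (r : RationalRep k A V) :
    r.fixedPointsUnder π ⊆ r.fixedPoints := fun v hv => by
  obtain ⟨y, hy⟩ := (Module.Flat.lTensor_exact V (exact_algebraMap_rightInvarianceDefect hconst)
    (r.ρ v)).mp (lTensor_rightInvarianceDefect_rho hv)
  obtain ⟨w, rfl⟩ := (TensorProduct.rid k V).symm.surjective y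
  have hρ : r.ρ v = w ⊗ₜ[k] 1 := by simp [← hy]
  exact eq_of_rho_eq_tmul_one hρ ▸ hρ

end RationalRep

end

theorem fixedPoints_eq_of_only_constant_invariants_general
    (k A B : Type) [Field k] [CommRing A] [HopfAlgebra k A] [CommRing B]
    [HopfAlgebra k B] (π : A →ₐc[k] B)
    (hconst : rightInvariants k A B π = Set.range (algebraMap k A)) :
    ∀ (V : Type) (_ : AddCommGroup V) (_ : Module k V) (_ : FiniteDimensional k V)
      (r : RationalRep k A V),
      r.fixedPointsUnder π = r.fixedPoints := fun _ _ _ _ r =>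
  (r.fixedPointsUnder_subset_fixedPoints hconst.subset).antisymm
    (r.fixedPoints_subset_fixedPointsUnder π)

/-- If `O(G/H) = k`, then for every finite-dimensional `G`-module `V` one has
`V^H = V^G`. -/
theorem fixedPoints_eq_of_only_constant_invariants
    (k A B : Type) [Field k] [CommRing A] [HopfAlgebra k A] [CommRing B]
    [HopfAlgebra k B] (hA : Algebra.FiniteType k A) (hB : Algebra.FiniteType k B)
    (π : A →ₐc[k] B) (hπ : Function.Surjective π)
    (hconst : rightInvariants k A B π = Set.range (algebraMap k A)) :
    ∀ (V : Type) (_ : AddCommGroup V) (_ : Module k V) (_ : FiniteDimensional k V)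
      (r : RationalRep k A V),
      r.fixedPointsUnder π = r.fixedPoints :=
  fixedPoints_eq_of_only_constant_invariants_general k A B π hconst
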